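/- V(x) tends to +∞ as x approaches the boundary of D, uniformly in the following sense: for every M > 0 there exists δ > 0 such that for every x ∈ D, if min( x₂ − x₁, x₃ − x₂, …, x_N − x_{N−1}, x₁ + l − x_N ) < δ then V(x) ≥ M. -/
import Mathlib


open Finset

lemma reduce_period (l : ℝ) (hl : 0 < l) (γ : ℝ → ℂ) (hper : Function.Periodic γ l) (a : ℝ) :
    ∃ r, 0 ≤ r ∧ r < l ∧ γ a = γ r ∧ ∃ k : ℤ, a = r + k * l :=
  ⟨a - ⌊a / l⌋ * l, Int.sub_floor_div_mul_nonneg a hl,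
    Int.sub_floor_div_mul_lt a hl, (hper.sub_int_mul_eq ⌊a / l⌋).symm, ⟨⌊a / l⌋, by ring⟩⟩

lemma gamma_ne (l : ℝ) (hl : 0 < l) (γ : ℝ → ℂ) (hper : Function.Periodic γ l)
    (hinj : Set.InjOn γ (Set.Ico 0 l)) (a b : ℝ) (h1 : 0 < b - a) (h2 : b - a < l) :
    γ a ≠ γ b := by
  obtain ⟨ra, hra0, hral, hga, ka, hka⟩ := reduce_period l hl γ hper a
  obtain ⟨rb, hrb0, hrbl, hgb, kb, hkb⟩ := reduce_period l hl γ hper b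
  intro h
  have hr : ra = rb := hinj ⟨hra0, hral⟩ ⟨hrb0, hrbl⟩ (by rw [← hga, ← hgb, h])
  have hba : b - a = ((kb - ka : ℤ) : ℝ) * l := by
    rw [hka, hkb, hr]; push_cast; ring
  have hk0 : (0:ℤ) < kb - ka := by
    by_contra hc
    push_neg at hc
    have : ((kb - ka : ℤ) : ℝ) * l ≤ 0 :=
      mul_nonpos_of_nonpos_of_nonneg (by exact_mod_cast hc) hl.le
    linarith
  have hk1 : (1:ℝ) ≤ ((kb - ka : ℤ) : ℝ) := by exact_mod_cast hk0
  have : l ≤ ((kb - ka : ℤ) : ℝ) * l := le_mul_of_one_le_left hl.le hk1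
  linarith

lemma gamma_bound (l : ℝ) (hl : 0 < l) (γ : ℝ → ℂ) (hper : Function.Periodic γ l)
    (hlip : LipschitzWith 1 γ) (a b : ℝ) : ‖γ a - γ b‖ ≤ l := by
  obtain ⟨ra, hra0, hral, hga, _⟩ := reduce_period l hl γ hper a
  obtain ⟨rb, hrb0, hrbl, hgb, _⟩ := reduce_period l hl γ hper b
  rw [hga, hgb]
  have h1 := hlip.dist_le_mul ra rb
  simp only [dist_eq_norm, Real.dist_eq, Real.norm_eq_abs, NNReal.coe_one, one_mul] at h1
  have h2 : |ra - rb| ≤ l := abs_le.mpr ⟨by linarith, by linarith⟩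
  linarith

/-- `V(x) → +∞` as `x → ∂D`, uniformly: for every `M > 0` there is `δ > 0` such
that `V(x) ≥ M` whenever some gap `x_{i+1} − x_i` (or the wrap-around gap
`x₁ + l − x_N`) is smaller than `δ`. -/
theorem potential_blows_up_at_boundary
    (l : ℝ) (hl : 0 < l)
    (γ : ℝ → ℂ) (hcont : Continuous γ) (hper : Function.Periodic γ l)
    (hinj : Set.InjOn γ (Set.Ico 0 l)) (hlip : LipschitzWith 1 γ)
    (N : ℕ) (hN : 2 ≤ N)
    (D : Set (Fin N → ℝ))
    (hD : D = {x | (∀ i j : Fin N, i < j → x i < x j) ∧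
      ∀ i : Fin N, x i < x ⟨0, by omega⟩ + l})
    (V : (Fin N → ℝ) → ℝ)
    (hV : V = fun x => -∑ p ∈ Finset.univ.filter (fun p : Fin N × Fin N => p.1 < p.2),
      Real.log ‖γ (x p.1) - γ (x p.2)‖) :
    ∀ M > 0, ∃ δ > 0, ∀ x ∈ D,
      (∃ i : Fin N,
        (if h : (i : ℕ) + 1 < N then x ⟨(i : ℕ) + 1, h⟩ - x i
          else x ⟨0, by omega⟩ + l - x i) < δ) →
      M ≤ V x := by
  intro M hM
  set K : ℝ := max 1 l with hKdef
  have hK1 : (1:ℝ) ≤ K := le_max_left _ _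
  have hlK : l ≤ K := le_max_right _ _
  have hL0 : 0 ≤ Real.log K := Real.log_nonneg hK1
  set S : Finset (Fin N × Fin N) :=
    Finset.univ.filter (fun p : Fin N × Fin N => p.1 < p.2) with hS
  set P : ℕ := S.card with hP
  refine ⟨Real.exp (-(M + P * Real.log K)), Real.exp_pos _, ?_⟩
  intro x hx hex
  obtain ⟨i, hi⟩ := hex
  rw [hD] at hx
  obtain ⟨hord, hwrap⟩ := hx
  have hterm_le : ∀ p : Fin N × Fin N,
      Real.log ‖γ (x p.1) - γ (x p.2)‖ ≤ Real.log K := by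
    intro p
    rcases eq_or_lt_of_le (norm_nonneg (γ (x p.1) - γ (x p.2))) with h0 | h0
    · rw [← h0]; simpa using hL0
    · exact Real.log_le_log h0 (le_trans (gamma_bound l hl γ hper hlip _ _) hlK)
  have final : ∀ p₀ ∈ S,
      Real.log ‖γ (x p₀.1) - γ (x p₀.2)‖ ≤ -(M + P * Real.log K) → M ≤ V x := by
    intro p₀ hp₀ hkey
    simp only [hV]
    have hsplit : ∑ p ∈ S, Real.log ‖γ (x p.1) - γ (x p.2)‖
        = Real.log ‖γ (x p₀.1) - γ (x p₀.2)‖ +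
          ∑ p ∈ S.erase p₀, Real.log ‖γ (x p.1) - γ (x p.2)‖ :=
      (Finset.add_sum_erase S _ hp₀).symm
    have hrest : ∑ p ∈ S.erase p₀, Real.log ‖γ (x p.1) - γ (x p.2)‖
        ≤ ((S.erase p₀).card : ℝ) * Real.log K := by
      calc ∑ p ∈ S.erase p₀, Real.log ‖γ (x p.1) - γ (x p.2)‖
          ≤ ∑ _p ∈ S.erase p₀, Real.log K := Finset.sum_le_sum (fun p _ => hterm_le p)
        _ = ((S.erase p₀).card : ℝ) * Real.log K := by
            rw [Finset.sum_const, nsmul_eq_mul]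
    have hcard : ((S.erase p₀).card : ℝ) ≤ (P : ℝ) := by
      exact_mod_cast Finset.card_le_card (Finset.erase_subset _ _)
    have hcm : ((S.erase p₀).card : ℝ) * Real.log K ≤ (P : ℝ) * Real.log K :=
      mul_le_mul_of_nonneg_right hcard hL0
    linarith
  by_cases h : (i : ℕ) + 1 < N
  · rw [dif_pos h] at hi
    set j : Fin N := ⟨(i : ℕ) + 1, h⟩ with hj
    have hij : i < j := by simp [hj, Fin.lt_def]
    have hp₀S : (i, j) ∈ S := by
      rw [hS]; exact Finset.mem_filter.mpr ⟨Finset.mem_univ _, hij⟩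
    have hg0 : 0 < x j - x i := sub_pos.mpr (hord i j hij)
    have h0le : x ⟨0, by omega⟩ ≤ x i := by
      rcases Nat.eq_zero_or_pos (i : ℕ) with h0 | h0
      · have hie : i = ⟨0, by omega⟩ := Fin.ext h0
        exact (congrArg x hie).ge
      · exact (hord ⟨0, by omega⟩ i (by simpa [Fin.lt_def] using h0)).le
    have hgl : x j - x i < l := by
      have := hwrap j
      linarith
    have hne : γ (x i) ≠ γ (x j) := gamma_ne l hl γ hper hinj _ _ hg0 hgl
    have ht : ‖γ (x i) - γ (x j)‖ ≤ x j - x i := by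
      have h1 := hlip.dist_le_mul (x i) (x j)
      simp only [dist_eq_norm, Real.dist_eq, Real.norm_eq_abs, NNReal.coe_one, one_mul] at h1
      have : |x i - x j| = x j - x i := by
        rw [abs_sub_comm, abs_of_pos hg0]
      linarith
    have htpos : 0 < ‖γ (x i) - γ (x j)‖ := by
      rw [norm_pos_iff]
      exact sub_ne_zero.mpr hne
    refine final (i, j) hp₀S ?_
    calc Real.log ‖γ (x i) - γ (x j)‖
        ≤ Real.log (Real.exp (-(M + P * Real.log K))) :=
          Real.log_le_log htpos (le_trans ht hi.le)
      _ = -(M + P * Real.log K) := Real.log_exp _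
  · rw [dif_neg h] at hi
    set z : Fin N := ⟨0, by omega⟩ with hz
    have h0i : z < i := by
      have : (i : ℕ) = N - 1 := by omega
      simp [hz, Fin.lt_def, this]
      omega
    have hp₀S : (z, i) ∈ S := by
      rw [hS]; exact Finset.mem_filter.mpr ⟨Finset.mem_univ _, h0i⟩
    have hxlt : x z < x i := hord z i h0i
    have hg0 : 0 < x z + l - x i := by
      have := hwrap i
      simp only [hz] at *
      linarith
    have hgl : x z + l - x i < l := by linarith
    have hne0 : γ (x i) ≠ γ (x z + l) :=
      gamma_ne l hl γ hper hinj (x i) (x z + l) (by linarith) (by linarith)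
    have hperz : γ (x z + l) = γ (x z) := hper (x z)
    have hne : γ (x z) ≠ γ (x i) := by
      rw [← hperz]
      exact fun hc => hne0 hc.symm
    have ht : ‖γ (x z) - γ (x i)‖ ≤ x z + l - x i := by
      have h1 := hlip.dist_le_mul (x z + l) (x i)
      simp only [dist_eq_norm, Real.dist_eq, Real.norm_eq_abs, NNReal.coe_one, one_mul, hperz] at h1
      have : |x z + l - x i| = x z + l - x i := abs_of_pos hg0
      linarith
    have htpos : 0 < ‖γ (x z) - γ (x i)‖ := by
      rw [norm_pos_iff]
      exact sub_ne_zero.mpr hne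
    refine final (z, i) hp₀S ?_
    calc Real.log ‖γ (x z) - γ (x i)‖
        ≤ Real.log (Real.exp (-(M + P * Real.log K))) :=
          Real.log_le_log htpos (le_trans ht hi.le)
      _ = -(M + P * Real.log K) := Real.log_exp _
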